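/- Let K and K* be positive commutative monoids and let h : K* → K be a surjective additive monoid homomorphism (a cover of K). Let V be a finite type, let D assign to each v ∈ V a finite type D v of values, let E : Fin m → Finset V be a schema, and let R_i : ((v : {v // v ∈ E i}) → D v) → K be a K-relation over E i for each i ∈ Fin m. Then the collection R_1,...,R_m is globally consistent over K (there exists W : ((v : V) → D v) → K whose marginal on E i equals R_i for all i) if and only if it is globally consistent up to the cover h, i.e., there exist h-lifts R*_i : ((v : {v // v ∈ E i}) → D v) → K* with h ∘ R*_i = R_i for all i, and W* : ((v : V) → D v) → K* whose marginal on E i equals R*_i for all i. -/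
import Mathlib


/-- The marginal of an `M`-relation `W` over dependent tuples on the hyperedge
`E ⊆ V`: the value on a tuple `t` over `E` is the sum of `W s` over all tuples
`s` over `V` whose restriction to `E` equals `t`. -/
def marginal {M V : Type*} [AddCommMonoid M] [Fintype V] [DecidableEq V]
    {D : V → Type*} [∀ v, Fintype (D v)] [∀ v, DecidableEq (D v)]
    (W : ((v : V) → D v) → M) (E : Finset V) :
    ((v : {x // x ∈ E}) → D v.1) → M :=
  fun t => ∑ s : (v : V) → D v, if ∀ v : {x // x ∈ E}, s v.1 = t v then W s else 0


lemma marginal_map {M N V : Type*} [AddCommMonoid M] [AddCommMonoid N]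
    [Fintype V] [DecidableEq V]
    {D : V → Type*} [∀ v, Fintype (D v)] [∀ v, DecidableEq (D v)]
    (h : M →+ N) (W : ((v : V) → D v) → M) (E : Finset V) :
    marginal (fun s => h (W s)) E = fun t => h (marginal W E t) := by
  funext t
  simp [marginal, map_sum, apply_ite h]

/-- absoluteness of global consistency: a collection of
`K`-relations over a schema is globally consistent iff it is globally
consistent up to a given cover `h : K* → K`. -/
theorem globalConsistency_absolute (K Kstar : Type*)
    [AddCommMonoid K] [AddCommMonoid Kstar]
    (hposK : ∀ p q : K, p + q = 0 → p = 0 ∧ q = 0)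
    (hposKstar : ∀ p q : Kstar, p + q = 0 → p = 0 ∧ q = 0)
    (h : Kstar →+ K) (hsurj : Function.Surjective h)
    (V : Type*) [Fintype V] [DecidableEq V]
    (D : V → Type*) [∀ v, Fintype (D v)] [∀ v, DecidableEq (D v)]
    (m : ℕ) (E : Fin m → Finset V)
    (R : (i : Fin m) → ((v : {x // x ∈ E i}) → D v.1) → K) :
    (∃ W : ((v : V) → D v) → K, ∀ i : Fin m, marginal W (E i) = R i) ↔
    (∃ (Rstar : (i : Fin m) → ((v : {x // x ∈ E i}) → D v.1) → Kstar)
       (Wstar : ((v : V) → D v) → Kstar),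
        (∀ i : Fin m, h ∘ Rstar i = R i) ∧
        (∀ i : Fin m, marginal Wstar (E i) = Rstar i)) := by
  constructor
  · rintro ⟨W, hW⟩
    choose g hg using hsurj
    refine ⟨fun i => marginal (fun s => g (W s)) (E i), fun s => g (W s),
      fun i => ?_, fun i => rfl⟩
    funext t
    have := congrFun (marginal_map h (fun s => g (W s)) (E i)) t
    simp only [Function.comp_apply]
    rw [← this]
    simp only [hg]
    exact congrFun (hW i) t
  · rintro ⟨Rstar, Wstar, hR, hM⟩
    refine ⟨fun s => h (Wstar s), fun i => ?_⟩
    rw [marginal_map, ← hR i]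
    funext t
    simp [← hM i]
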